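/- arXiv:2112.10401 — 2 statements merged into one kernel-verified Lean document; each statement's English description precedes it below -/
import Mathlib

section
/- Let X_n be an n-point design in a compact set X ⊂ ℝ^d and let X_m ⊆ X_n be any sub-design with m points, where n ≥ m ≥ 2. Then the separation radius satisfies SR(X_n) ≤ (vol(X_0)/V_d)^{1/d} · n^{-1/d}, where X_0 = X ⊕ B(0, SR(X_m)) is the Minkowski sum of X with the closed ball of radius SR(X_m). -/
open Metric Set MeasureTheory Pointwise
open scoped ENNReal

/-- Distance from a point `x` to the nearest point of the design `D`. -/
noncomputable def minDist {E : Type*} [NormedAddCommGroup E] (D : Finset E) (x : E) : ℝ :=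
  sInf ((fun p => dist x p) '' (D : Set E))

/-- Fill distance (covering radius) of the design `D` for the set `A`:
`CR_A(D) = sup_{x ∈ A} min_{p ∈ D} ‖x - p‖`. -/
noncomputable def fillDist {E : Type*} [NormedAddCommGroup E] (A : Set E) (D : Finset E) : ℝ :=
  sSup ((fun x => minDist D x) '' A)

/-- Separation radius of the design `D`:
`SR(D) = (1/2) min_{p ≠ q ∈ D} ‖p - q‖`. -/
noncomputable def sepRad {E : Type*} [NormedAddCommGroup E] (D : Finset E) : ℝ :=
  (1 / 2) * sInf ((fun p : E × E => dist p.1 p.2) '' {p | p.1 ∈ D ∧ p.2 ∈ D ∧ p.1 ≠ p.2})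

/-- Mesh-ratio of the design `D` for the set `A`: `MR(D) = CR_A(D) / SR(D)`. -/
noncomputable def meshRatio {E : Type*} [NormedAddCommGroup E] (A : Set E) (D : Finset E) : ℝ :=
  fillDist A D / sepRad D

/-- The nested design consisting of the first `n` points of the sequence `x`. -/
noncomputable def design {E : Type*} (x : ℕ → E) (n : ℕ) : Finset E :=
  letI := Classical.decEq E
  (Finset.range n).image x

/-!
The open balls of radius `SR(D)` centred at the points of `D` are pairwise disjoint (open, so
that balls touching at distance exactly `2 SR(D)` do not overlap) and lie in
`S ⊕ B(0, SR(D)) ⊆ S ⊕ B(0, SR(Dm))`, the inclusion because removing points can only increase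
the separation radius. Comparing volumes gives `n · SR(D)^d · V_d ≤ vol(S ⊕ B(0, SR(Dm)))`;
take `d`-th roots.
-/

section SeparationRadius

variable {E : Type*} [NormedAddCommGroup E]

theorem sepRad_nonneg (D : Finset E) : 0 ≤ sepRad D :=
  mul_nonneg (by norm_num) (Real.sInf_nonneg (by rintro _ ⟨p, _, rfl⟩; exact dist_nonneg))

theorem two_mul_sepRad_le_dist {D : Finset E} {p q : E} (hp : p ∈ D) (hq : q ∈ D)
    (hpq : p ≠ q) : 2 * sepRad D ≤ dist p q := by
  have hbdd : BddBelow ((fun p : E × E => dist p.1 p.2) ''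
      {p | p.1 ∈ D ∧ p.2 ∈ D ∧ p.1 ≠ p.2}) :=
    ⟨0, by rintro _ ⟨_, _, rfl⟩; exact dist_nonneg⟩
  have := csInf_le hbdd ⟨(p, q), ⟨hp, hq, hpq⟩, rfl⟩
  unfold sepRad
  linarith

theorem sepRad_le_sepRad_of_subset {D D' : Finset E} (hsub : D' ⊆ D) (hD' : 2 ≤ D'.card) :
    sepRad D ≤ sepRad D' := by
  obtain ⟨a, ha, b, hb, hab⟩ := Finset.one_lt_card.1 hD'
  have hbdd : BddBelow ((fun p : E × E => dist p.1 p.2) ''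
      {p | p.1 ∈ D ∧ p.2 ∈ D ∧ p.1 ≠ p.2}) :=
    ⟨0, by rintro _ ⟨_, _, rfl⟩; exact dist_nonneg⟩
  have hpairs : {p : E × E | p.1 ∈ D' ∧ p.2 ∈ D' ∧ p.1 ≠ p.2} ⊆
      {p | p.1 ∈ D ∧ p.2 ∈ D ∧ p.1 ≠ p.2} := fun p hp => ⟨hsub hp.1, hsub hp.2.1, hp.2.2⟩
  have hne : {p : E × E | p.1 ∈ D' ∧ p.2 ∈ D' ∧ p.1 ≠ p.2}.Nonempty := ⟨(a, b), ha, hb, hab⟩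
  have := csInf_le_csInf hbdd (hne.image _) (image_mono hpairs)
  unfold sepRad
  linarith

end SeparationRadius

theorem card_mul_measure_ball_le_measure_add_closedBall {E : Type*} [NormedAddCommGroup E]
    [MeasurableSpace E] [BorelSpace E] (μ : Measure E) [μ.IsAddLeftInvariant]
    {S : Set E} {D : Finset E} (hDS : ↑D ⊆ S) {r : ℝ} (hr : r ≤ sepRad D) :
    D.card * μ (ball 0 r) ≤ μ (S + closedBall 0 r) := by
  have hdisj : (D : Set E).PairwiseDisjoint fun p => ball p r := fun p hp q hq hpq =>
    ball_disjoint_ball (by linarith [two_mul_sepRad_le_dist hp hq hpq])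
  have hsub : (⋃ p ∈ D, ball p r) ⊆ S + closedBall 0 r := by
    simp only [iUnion_subset_iff]
    intro p hp y hy
    rw [← add_sub_cancel p y]
    exact add_mem_add (hDS hp) (mem_closedBall_zero_iff.2 (le_of_lt (by rwa [← dist_eq_norm])))
  have hball : ∀ p, μ (ball p r) = μ (ball 0 r) := fun p => by
    rw [← measure_preimage_add μ p (ball p r), preimage_add_ball, sub_self]
  calc (D.card : ℝ≥0∞) * μ (ball 0 r) = ∑ p ∈ D, μ (ball p r) := by
        simp [hball]
    _ = μ (⋃ p ∈ D, ball p r) := (measure_biUnion_finset hdisj fun _ _ => measurableSet_ball).symm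
    _ ≤ μ (S + closedBall 0 r) := measure_mono hsub

theorem le_rpow_mul_rpow_of_mul_pow_mul_le {r A V : ℝ} {n d : ℕ} (hd : d ≠ 0) (hr : 0 ≤ r)
    (hn : 0 < n) (hV : 0 < V) (h : n * (r ^ d * V) ≤ A) :
    r ≤ (A / V) ^ ((1 : ℝ) / d) * (n : ℝ) ^ (-(1 : ℝ) / d) := by
  have hn' : (0 : ℝ) < n := Nat.cast_pos.2 hn
  have hA : 0 ≤ A / V := div_nonneg (le_trans (by positivity) h) hV.le
  have hpow : r ^ d ≤ A / V * (n : ℝ)⁻¹ := by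
    rw [← div_eq_mul_inv, div_div, le_div_iff₀ (by positivity)]
    linarith
  calc r = (r ^ d) ^ ((1 : ℝ) / d) := by rw [one_div, Real.pow_rpow_inv_natCast hr hd]
    _ ≤ (A / V * (n : ℝ)⁻¹) ^ ((1 : ℝ) / d) := by gcongr
    _ = (A / V) ^ ((1 : ℝ) / d) * (n : ℝ) ^ (-(1 : ℝ) / d) := by
      rw [Real.mul_rpow hA (by positivity), Real.inv_rpow hn'.le,
        ← Real.rpow_neg hn'.le, neg_div]

/-- Let `D` be an `n`-point design in a compact set `S ⊆ ℝ^d` and `Dm ⊆ D`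
any sub-design with `m` points, `n ≥ m ≥ 2`. Then
`SR(D) ≤ (vol(S ⊕ B(0, SR(Dm)))/V_d)^(1/d) · n^(-1/d)`, where `⊕` is the Minkowski sum. -/
theorem statement2 {d : ℕ} (hd : 1 ≤ d)
    {E : Type*} [NormedAddCommGroup E] [NormedSpace ℝ E] [FiniteDimensional ℝ E]
    [MeasurableSpace E] [BorelSpace E] (hdim : Module.finrank ℝ E = d)
    (S : Set E) (hS : IsCompact S)
    (n m : ℕ) (hm : 2 ≤ m) (hmn : m ≤ n)
    (D Dm : Finset E) (hDS : ↑D ⊆ S) (hDcard : D.card = n)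
    (hsub : Dm ⊆ D) (hDmcard : Dm.card = m) :
    sepRad D ≤
      (((Measure.addHaar : Measure E) (S + Metric.closedBall (0 : E) (sepRad Dm))).toReal /
          ((Measure.addHaar : Measure E) (Metric.closedBall (0 : E) 1)).toReal) ^ ((1 : ℝ) / d) *
        (n : ℝ) ^ (-(1 : ℝ) / d) := by
  have : Nontrivial E := Module.nontrivial_of_finrank_pos (R := ℝ) (hdim ▸ hd)
  set μ : Measure E := Measure.addHaar
  set X₀ := S + closedBall (0 : E) (sepRad Dm)
  have hρ : 0 ≤ sepRad D := sepRad_nonneg D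
  have hpack : (n : ℝ≥0∞) * (ENNReal.ofReal (sepRad D ^ d) * μ (closedBall 0 1)) ≤ μ X₀ :=
    calc (n : ℝ≥0∞) * (ENNReal.ofReal (sepRad D ^ d) * μ (closedBall 0 1))
        = D.card * μ (ball 0 (sepRad D)) := by
          rw [Measure.addHaar_ball μ 0 hρ, Measure.addHaar_unitClosedBall_eq_addHaar_unitBall,
            hdim, hDcard]
      _ ≤ μ (S + closedBall 0 (sepRad D)) :=
          card_mul_measure_ball_le_measure_add_closedBall μ hDS le_rfl
      _ ≤ μ X₀ := measure_mono (add_subset_add_left (closedBall_subset_closedBall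
          (sepRad_le_sepRad_of_subset hsub (hDmcard ▸ hm))))
  have hX₀ : μ X₀ ≠ ⊤ := (hS.add (isCompact_closedBall 0 _)).measure_lt_top.ne
  have hB : μ (closedBall (0 : E) 1) ≠ ⊤ := (isCompact_closedBall 0 1).measure_lt_top.ne
  refine le_rpow_mul_rpow_of_mul_pow_mul_le (by omega) hρ (by omega)
    (ENNReal.toReal_pos (measure_closedBall_pos μ 0 one_pos).ne' hB) ?_
  simpa [ENNReal.toReal_mul, ENNReal.toReal_ofReal (pow_nonneg hρ d)] using
    ENNReal.toReal_mono hX₀ hpack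
end

section
/- For any quasi-uniform sequence of nested designs X_n with uniformity constant ρ (i.e., MR(X_n) ≤ ρ for all n ≥ 2) in a compact set X ⊂ ℝ^d with vol(X) > 0, there exist positive constants c_1 and c_2 such that c_1 · n^{-1/d} ≤ CR(X_n) ≤ ρ · SR(X_n) ≤ c_2 · n^{-1/d} for all n ≥ 2. -/
open Metric Set MeasureTheory

/-! The closed balls of radius `CR(Xₙ)` around the `n` design points cover `X`, so
`vol X ≤ n · CR(Xₙ)^d · vol B₁`; the open balls of radius `SR(Xₙ)` are disjoint and lie in a ball
of radius `2 · diam X`, so `n · SR(Xₙ)^d ≤ (2 · diam X)^d`. Quasi-uniformity gives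
`CR(Xₙ) ≤ ρ · SR(Xₙ)`, and taking `d`-th roots yields the rate `n^{-1/d}`. -/

section Design

variable {E : Type*} {x : ℕ → E}

lemma mem_design {i n : ℕ} (hi : i < n) : x i ∈ design x n := by
  classical
  exact Finset.mem_image_of_mem x (Finset.mem_range.2 hi)

lemma coe_design_subset {S : Set E} (hmem : ∀ n, x n ∈ S) (n : ℕ) :
    (design x n : Set E) ⊆ S := by
  classical
  intro y hy
  obtain ⟨i, -, rfl⟩ := Finset.mem_image.1 hy
  exact hmem i

lemma card_design (hinj : Function.Injective x) (n : ℕ) : (design x n).card = n := by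
  classical
  exact (Finset.card_image_of_injective _ hinj).trans (Finset.card_range n)

lemma exists_ne_mem_design (hinj : Function.Injective x) {n : ℕ} (hn : 2 ≤ n) :
    ∃ p ∈ design x n, ∃ q ∈ design x n, p ≠ q :=
  ⟨x 0, mem_design (by omega), x 1, mem_design (by omega), hinj.ne zero_ne_one⟩

end Design

section Metric

variable {E : Type*} [NormedAddCommGroup E]

lemma minDist_eq_infDist (D : Finset E) (y : E) : minDist D y = infDist y (D : Set E) := by
  rw [minDist, infDist_eq_iInf, iInf, ← Set.image_eq_range]

lemma fillDist_nonneg (A : Set E) (D : Finset E) : 0 ≤ fillDist A D :=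
  Real.sSup_nonneg <| by
    rintro _ ⟨y, -, rfl⟩
    exact infDist_nonneg.trans (minDist_eq_infDist D y).ge

lemma infDist_le_fillDist {A : Set E} (hA : IsCompact A) (D : Finset E) {y : E} (hy : y ∈ A) :
    infDist y (D : Set E) ≤ fillDist A D := by
  have himage : (fun y => minDist D y) '' A = (fun y => infDist y (D : Set E)) '' A :=
    Set.image_congr fun y _ => minDist_eq_infDist D y
  rw [fillDist, himage]
  exact le_csSup (hA.image (continuous_infDist_pt _)).bddAbove ⟨y, hy, rfl⟩

lemma subset_biUnion_closedBall_fillDist {A : Set E} (hA : IsCompact A) {D : Finset E}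
    (hD : D.Nonempty) : A ⊆ ⋃ p ∈ D, closedBall p (fillDist A D) := by
  intro y hy
  obtain ⟨p, hp, hyp⟩ :=
    D.finite_toSet.isCompact.exists_infDist_eq_dist (Finset.coe_nonempty.2 hD) y
  exact Set.mem_biUnion hp (mem_closedBall.2 (hyp ▸ infDist_le_fillDist hA D hy))

lemma finite_image_dist_of_ne (D : Finset E) :
    ((fun p : E × E => dist p.1 p.2) '' {p | p.1 ∈ D ∧ p.2 ∈ D ∧ p.1 ≠ p.2}).Finite :=
  ((D.finite_toSet.prod D.finite_toSet).subset fun _ h => ⟨h.1, h.2.1⟩).image _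

lemma sepRad_le_half_dist {D : Finset E} {p q : E} (hp : p ∈ D) (hq : q ∈ D) (hpq : p ≠ q) :
    sepRad D ≤ dist p q / 2 := by
  have := csInf_le (finite_image_dist_of_ne D).bddBelow ⟨(p, q), ⟨hp, hq, hpq⟩, rfl⟩
  rw [sepRad]
  linarith

lemma exists_sepRad_eq_half_dist {D : Finset E} (hD : ∃ p ∈ D, ∃ q ∈ D, p ≠ q) :
    ∃ p ∈ D, ∃ q ∈ D, p ≠ q ∧ sepRad D = dist p q / 2 := by
  obtain ⟨p, hp, q, hq, hpq⟩ := hD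
  have hne : ((fun p : E × E => dist p.1 p.2) '' {p | p.1 ∈ D ∧ p.2 ∈ D ∧ p.1 ≠ p.2}).Nonempty :=
    ⟨dist p q, (p, q), ⟨hp, hq, hpq⟩, rfl⟩
  obtain ⟨⟨a, b⟩, ⟨ha, hb, hab⟩, heq⟩ := hne.csInf_mem (finite_image_dist_of_ne D)
  exact ⟨a, ha, b, hb, hab, by rw [sepRad, ← heq]; ring⟩

lemma sepRad_pos {D : Finset E} (hD : ∃ p ∈ D, ∃ q ∈ D, p ≠ q) : 0 < sepRad D := by
  obtain ⟨p, -, q, -, hpq, hsep⟩ := exists_sepRad_eq_half_dist hD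
  rw [hsep]
  exact half_pos (dist_pos.2 hpq)

lemma pairwiseDisjoint_ball_sepRad (D : Finset E) :
    (D : Set E).PairwiseDisjoint fun p => ball p (sepRad D) := fun p hp q hq hpq =>
  ball_disjoint_ball (by linarith [sepRad_le_half_dist hp hq hpq])

end Metric

section Volume

variable {E : Type*} [NormedAddCommGroup E] [NormedSpace ℝ E] [FiniteDimensional ℝ E]
  [MeasurableSpace E] [BorelSpace E]

lemma measure_div_measure_ball_le_card_mul_fillDist_pow (μ : Measure E) [μ.IsAddHaarMeasure]
    {A : Set E} (hA : IsCompact A) {D : Finset E} (hD : D.Nonempty) :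
    (μ A).toReal / (μ (ball 0 1)).toReal ≤ D.card * fillDist A D ^ Module.finrank ℝ E := by
  set h := fillDist A D
  have hball : 0 < (μ (ball 0 1)).toReal :=
    ENNReal.toReal_pos (measure_ball_pos μ 0 one_pos).ne' measure_ball_lt_top.ne
  have hcover : μ A ≤ D.card * (ENNReal.ofReal (h ^ Module.finrank ℝ E) * μ (ball 0 1)) :=
    calc μ A ≤ μ (⋃ p ∈ D, closedBall p h) :=
          measure_mono (subset_biUnion_closedBall_fillDist hA hD)
      _ ≤ ∑ p ∈ D, μ (closedBall p h) := measure_biUnion_finset_le D _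
      _ = D.card * (ENNReal.ofReal (h ^ Module.finrank ℝ E) * μ (ball 0 1)) := by
          rw [Finset.sum_congr rfl fun p _ => μ.addHaar_closedBall p (fillDist_nonneg A D),
            Finset.sum_const, nsmul_eq_mul]
  have := ENNReal.toReal_mono (by finiteness) hcover
  rw [ENNReal.toReal_mul, ENNReal.toReal_mul, ENNReal.toReal_natCast,
    ENNReal.toReal_ofReal (pow_nonneg (fillDist_nonneg A D) _)] at this
  rw [div_le_iff₀ hball]
  linarith

lemma card_mul_sepRad_pow_le {A : Set E} (hA : Bornology.IsBounded A) {D : Finset E}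
    (hDA : (D : Set E) ⊆ A) (hD : ∃ p ∈ D, ∃ q ∈ D, p ≠ q) :
    D.card * sepRad D ^ Module.finrank ℝ E ≤ (2 * diam A) ^ Module.finrank ℝ E := by
  set μ : Measure E := Measure.addHaar
  set r := sepRad D
  set k := Module.finrank ℝ E
  obtain ⟨p₀, hp₀, q₀, hq₀, hpq₀⟩ := hD
  have : Nontrivial E := nontrivial_of_ne p₀ q₀ hpq₀
  have hr : 0 < r := sepRad_pos ⟨p₀, hp₀, q₀, hq₀, hpq₀⟩
  have hrA : r ≤ diam A := by
    linarith [sepRad_le_half_dist hp₀ hq₀ hpq₀, dist_le_diam_of_mem hA (hDA hp₀) (hDA hq₀),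
      dist_nonneg (x := p₀) (y := q₀)]
  have hsub : ⋃ p ∈ D, ball p r ⊆ closedBall p₀ (2 * diam A) := by
    refine Set.iUnion₂_subset fun p hp y hy => mem_closedBall.2 ?_
    linarith [mem_ball.1 hy, dist_le_diam_of_mem hA (hDA hp) (hDA hp₀), dist_triangle y p p₀]
  have hpack : (D.card * ENNReal.ofReal (r ^ k)) * μ (ball 0 1) ≤
      ENNReal.ofReal ((2 * diam A) ^ k) * μ (ball 0 1) :=
    calc (D.card * ENNReal.ofReal (r ^ k)) * μ (ball 0 1) = ∑ p ∈ D, μ (ball p r) := by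
          rw [Finset.sum_congr rfl fun p _ => μ.addHaar_ball p hr.le, Finset.sum_const,
            nsmul_eq_mul, mul_assoc]
      _ = μ (⋃ p ∈ D, ball p r) :=
          (measure_biUnion_finset (pairwiseDisjoint_ball_sepRad D) fun _ _ =>
            measurableSet_ball).symm
      _ ≤ μ (closedBall p₀ (2 * diam A)) := measure_mono hsub
      _ = ENNReal.ofReal ((2 * diam A) ^ k) * μ (ball 0 1) :=
          μ.addHaar_closedBall _ (by linarith)
  rw [ENNReal.mul_le_mul_iff_left (measure_ball_pos μ 0 one_pos).ne' measure_ball_lt_top.ne,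
    ← ENNReal.ofReal_natCast, ← ENNReal.ofReal_mul (by positivity),
    ENNReal.ofReal_le_ofReal_iff (by positivity)] at hpack
  exact hpack

end Volume

section Rate

variable {d : ℕ} {a c m : ℝ}

lemma mul_rpow_neg_inv_pow (hd : d ≠ 0) (hm : 0 < m) :
    (c * m ^ (-(1 : ℝ) / d)) ^ d = c ^ d / m := by
  rw [mul_pow, neg_div, Real.rpow_neg hm.le, inv_pow, one_div,
    Real.rpow_inv_natCast_pow hm.le hd, div_eq_mul_inv]

lemma mul_rpow_neg_inv_le_iff (hd : d ≠ 0) (hc : 0 ≤ c) (ha : 0 ≤ a) (hm : 0 < m) :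
    c * m ^ (-(1 : ℝ) / d) ≤ a ↔ c ^ d ≤ m * a ^ d := by
  rw [← pow_le_pow_iff_left₀ (by positivity) ha hd, mul_rpow_neg_inv_pow hd hm,
    div_le_iff₀' hm]

lemma le_mul_rpow_neg_inv_iff (hd : d ≠ 0) (hc : 0 ≤ c) (ha : 0 ≤ a) (hm : 0 < m) :
    a ≤ c * m ^ (-(1 : ℝ) / d) ↔ m * a ^ d ≤ c ^ d := by
  rw [← pow_le_pow_iff_left₀ ha (by positivity) hd, mul_rpow_neg_inv_pow hd hm,
    le_div_iff₀' hm]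

end Rate

theorem statement3_general {d : ℕ}
    {E : Type*} [NormedAddCommGroup E] [NormedSpace ℝ E] [FiniteDimensional ℝ E]
    [MeasurableSpace E] [BorelSpace E] (hdim : Module.finrank ℝ E = d)
    (S : Set E) (hS : IsCompact S) (hvol : 0 < (Measure.addHaar : Measure E) S)
    (x : ℕ → E) (hinj : Function.Injective x) (hmem : ∀ n, x n ∈ S)
    (ρ : ℝ) (hρ : ∀ n, 2 ≤ n → meshRatio S (design x n) ≤ ρ) :
    ∃ c₁ c₂ : ℝ, 0 < c₁ ∧ 0 < c₂ ∧ ∀ n : ℕ, 2 ≤ n →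
      c₁ * (n : ℝ) ^ (-(1 : ℝ) / d) ≤ fillDist S (design x n) ∧
      fillDist S (design x n) ≤ ρ * sepRad (design x n) ∧
      ρ * sepRad (design x n) ≤ c₂ * (n : ℝ) ^ (-(1 : ℝ) / d) := by
  have : Nontrivial E := nontrivial_of_ne _ _ (hinj.ne zero_ne_one)
  have hd : d ≠ 0 := hdim ▸ Module.finrank_pos.ne'
  set μ : Measure E := Measure.addHaar
  set V := (μ S).toReal / (μ (ball 0 1)).toReal
  have hV : 0 < V := div_pos (ENNReal.toReal_pos hvol.ne' hS.measure_lt_top.ne)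
    (ENNReal.toReal_pos (measure_ball_pos μ 0 one_pos).ne' measure_ball_lt_top.ne)
  set R := diam S
  have hR : 0 < R := (dist_pos.2 (hinj.ne zero_ne_one)).trans_le
    (dist_le_diam_of_mem hS.isBounded (hmem 0) (hmem 1))
  have hsep : ∀ n, 2 ≤ n → 0 < sepRad (design x n) := fun n hn =>
    sepRad_pos (exists_ne_mem_design hinj hn)
  have hfill_le : ∀ n, 2 ≤ n → fillDist S (design x n) ≤ ρ * sepRad (design x n) :=
    fun n hn => (div_le_iff₀ (hsep n hn)).1 (hρ n hn)
  have hlow : ∀ n : ℕ, 2 ≤ n →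
      V ^ (d : ℝ)⁻¹ * (n : ℝ) ^ (-(1 : ℝ) / d) ≤ fillDist S (design x n) := by
    intro n hn
    rw [mul_rpow_neg_inv_le_iff hd (by positivity) (fillDist_nonneg _ _) (by positivity),
      Real.rpow_inv_natCast_pow hV.le hd]
    have := measure_div_measure_ball_le_card_mul_fillDist_pow μ hS
      ⟨x 0, mem_design (x := x) (by omega : 0 < n)⟩
    rwa [card_design hinj, hdim] at this
  have hup : ∀ n : ℕ, 2 ≤ n → sepRad (design x n) ≤ 2 * R * (n : ℝ) ^ (-(1 : ℝ) / d) := by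
    intro n hn
    rw [le_mul_rpow_neg_inv_iff hd (by positivity) (hsep n hn).le (by positivity)]
    have := card_mul_sepRad_pow_le hS.isBounded (coe_design_subset hmem n)
      (exists_ne_mem_design hinj hn)
    rwa [card_design hinj, hdim] at this
  have hρ0 : 0 < ρ := by
    have hpos : 0 < V ^ (d : ℝ)⁻¹ * ((2 : ℕ) : ℝ) ^ (-(1 : ℝ) / d) := by positivity
    exact pos_of_mul_pos_left ((hpos.trans_le (hlow 2 le_rfl)).trans_le (hfill_le 2 le_rfl))
      (hsep 2 le_rfl).le
  refine ⟨V ^ (d : ℝ)⁻¹, ρ * (2 * R), by positivity, by positivity,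
    fun n hn => ⟨hlow n hn, hfill_le n hn, ?_⟩⟩
  rw [mul_assoc]
  exact mul_le_mul_of_nonneg_left (hup n hn) hρ0.le

/-- For any quasi-uniform sequence of nested designs with uniformity
constant `ρ` in a compact set `S ⊆ ℝ^d` with `vol(S) > 0`, there exist positive constants
`c₁, c₂` with `c₁ n^{-1/d} ≤ CR(Xₙ) ≤ ρ·SR(Xₙ) ≤ c₂ n^{-1/d}` for all `n ≥ 2`. -/
theorem statement3 {d : ℕ} (hd : 1 ≤ d)
    {E : Type*} [NormedAddCommGroup E] [NormedSpace ℝ E] [FiniteDimensional ℝ E]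
    [MeasurableSpace E] [BorelSpace E] (hdim : Module.finrank ℝ E = d)
    (S : Set E) (hS : IsCompact S) (hvol : 0 < (Measure.addHaar : Measure E) S)
    (x : ℕ → E) (hinj : Function.Injective x) (hmem : ∀ n, x n ∈ S)
    (ρ : ℝ) (hρ : ∀ n, 2 ≤ n → meshRatio S (design x n) ≤ ρ) :
    ∃ c₁ c₂ : ℝ, 0 < c₁ ∧ 0 < c₂ ∧ ∀ n : ℕ, 2 ≤ n →
      c₁ * (n : ℝ) ^ (-(1 : ℝ) / d) ≤ fillDist S (design x n) ∧
      fillDist S (design x n) ≤ ρ * sepRad (design x n) ∧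
      ρ * sepRad (design x n) ≤ c₂ * (n : ℝ) ^ (-(1 : ℝ) / d) :=
  statement3_general hdim S hS hvol x hinj hmem ρ hρ
end
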